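/- Assume λ + μ² ≠ 0. Let P, Q, R, S : ℂ → ℂ be entire functions (not necessarily solving the pqrs-system) satisfying the B-relations: for every w ∈ ℂ, P(w+iπ) = e^{iℓπ}·(λ+μ²)⁻¹·(μ·e^{2w}·R(w) + S(w)); Q(w+iπ) = −e^{iℓπ}·((μ·e^{2w}·P(w) + Q(w)) + μ·(λ+μ²)⁻¹·e^{2w}·(μ·e^{2w}·R(w) + S(w))); R(w+iπ) = −e^{iℓπ}·R(w); S(w+iπ) = e^{iℓπ}·((λ+μ²)·P(w) + μ·e^{2w}·R(w)). Then the first integral is invariant under the semi-monodromy: for every w ∈ ℂ, 𝔇(w+iπ) = 𝔇(w), where 𝔇(w) = e^{2(1−ℓ)w}·(P(w)·S(w) − Q(w)·R(w)). -/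
import Mathlib


noncomputable def ipi : ℂ := (Real.pi : ℂ) * Complex.I

theorem statement_7 (ell lam mu : ℂ) (hne : lam + mu ^ 2 ≠ 0) (P Q R S : ℂ → ℂ)
    (hP : Differentiable ℂ P) (hQ : Differentiable ℂ Q)
    (hR : Differentiable ℂ R) (hS : Differentiable ℂ S)
    (hB : ∀ w : ℂ,
      P (w + ipi) = Complex.exp (Complex.I * ell * (Real.pi : ℂ)) * (lam + mu ^ 2)⁻¹ *
        (mu * Complex.exp (2 * w) * R w + S w) ∧
      Q (w + ipi) = -Complex.exp (Complex.I * ell * (Real.pi : ℂ)) *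
        ((mu * Complex.exp (2 * w) * P w + Q w) +
          mu * (lam + mu ^ 2)⁻¹ * Complex.exp (2 * w) *
            (mu * Complex.exp (2 * w) * R w + S w)) ∧
      R (w + ipi) = -Complex.exp (Complex.I * ell * (Real.pi : ℂ)) * R w ∧
      S (w + ipi) = Complex.exp (Complex.I * ell * (Real.pi : ℂ)) * ((lam + mu ^ 2) * P w + mu * Complex.exp (2 * w) * R w)) :
    ∀ w : ℂ,
      Complex.exp (2 * (1 - ell) * (w + ipi)) * (P (w + ipi) * S (w + ipi) - Q (w + ipi) * R (w + ipi)) =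
      Complex.exp (2 * (1 - ell) * (w)) * (P (w) * S (w) - Q (w) * R (w)) := by
  intro w
  obtain ⟨h1, h2, h3, h4⟩ := hB w
  rw [h1, h2, h3, h4]
  set E := Complex.exp (Complex.I * ell * (Real.pi : ℂ)) with hE
  have halg : E * (lam + mu ^ 2)⁻¹ * (mu * Complex.exp (2 * w) * R w + S w) *
      (E * ((lam + mu ^ 2) * P w + mu * Complex.exp (2 * w) * R w)) -
      -E * ((mu * Complex.exp (2 * w) * P w + Q w) +
        mu * (lam + mu ^ 2)⁻¹ * Complex.exp (2 * w) *
          (mu * Complex.exp (2 * w) * R w + S w)) * (-E * R w)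
      = E ^ 2 * (P w * S w - Q w * R w) := by
    field_simp
    ring
  rw [halg]
  have hexp : Complex.exp (2 * (1 - ell) * (w + ipi)) * E ^ 2 =
      Complex.exp (2 * (1 - ell) * w) := by
    rw [hE, sq, ← Complex.exp_add, ← Complex.exp_add]
    rw [show 2 * (1 - ell) * (w + ipi) + (Complex.I * ell * (Real.pi : ℂ) +
        Complex.I * ell * (Real.pi : ℂ)) = 2 * (1 - ell) * w + 2 * ((Real.pi : ℂ) * Complex.I)
        from by simp only [ipi]; ring]
    rw [Complex.exp_add, show (2 : ℂ) * ((Real.pi : ℂ) * Complex.I) = 2 * (Real.pi : ℂ) * Complex.I from by ring,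
      Complex.exp_two_pi_mul_I, mul_one]
  calc Complex.exp (2 * (1 - ell) * (w + ipi)) * (E ^ 2 * (P w * S w - Q w * R w))
      = Complex.exp (2 * (1 - ell) * (w + ipi)) * E ^ 2 * (P w * S w - Q w * R w) := by ring
    _ = _ := by rw [hexp]
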